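/- arXiv:2212.05584 — 2 statements merged into one kernel-verified Lean document; each statement's English description precedes it below -/
import Mathlib

section
/- Suppose 0 < γ < 3 - 2√2. Then there exist real numbers p > 1, q > 1, θ ∈ [0,1], β ∈ [0,1] and δ > 0 satisfying simultaneously: -γ(q-1) + 2β - 2/q > 0; -γ(p-1) - δ + θ > 0; 1/p + 1/2 < 1; and 1/p + β - δ + θ/2 ≤ 1. -/
/-- For `0 < γ < 3 - 2√2` there exist `p > 1`, `q > 1`, `θ ∈ [0,1]`, `β ∈ [0,1]` and
`δ > 0` satisfying simultaneously: `-γ(q-1) + 2β - 2/q > 0`; `-γ(p-1) - δ + θ > 0`;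
`1/p + 1/2 < 1`; and `1/p + β - δ + θ/2 ≤ 1`. -/
theorem stmt_6 (γ : ℝ) (h0 : 0 < γ) (h1 : γ < 3 - 2 * Real.sqrt 2) :
    ∃ p q θ β δ : ℝ, 1 < p ∧ 1 < q ∧ 0 ≤ θ ∧ θ ≤ 1 ∧ 0 ≤ β ∧ β ≤ 1 ∧ 0 < δ ∧
      -γ * (q - 1) + 2 * β - 2 / q > 0 ∧
      -γ * (p - 1) - δ + θ > 0 ∧
      1 / p + 1 / 2 < 1 ∧
      1 / p + β - δ + θ / 2 ≤ 1 := by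
  have hs : (1.4 : ℝ) < Real.sqrt 2 := by
    have : ((1.4 : ℝ)) = Real.sqrt (1.96) := by
      rw [show (1.96 : ℝ) = 1.4 ^ 2 by norm_num, Real.sqrt_sq (by norm_num)]
    rw [this]
    exact Real.sqrt_lt_sqrt (by norm_num) (by norm_num)
  have hγ : γ < 0.2 := by nlinarith
  refine ⟨3, 4, 1, 3/5, 13/30, by norm_num, by norm_num, by norm_num, by norm_num,
    by norm_num, by norm_num, by norm_num, by norm_num; linarith, by norm_num; linarith,
    by norm_num, by norm_num⟩
end

section
/- Let γ = 2(r-1)²/(r((r-1)²+1)) for some r > 1, and set q = r/(r-1) (so 1/q + 1/r = 1) and κ = 2/q. Then the equality -γ(r-1) - γ/(r-1) + 2(r-1)/r = 0 holds. Consequently, for every γ' < γ there exist q > 1 with γ' q < 2, κ > 0, r > 1 and δ > 0 such that -γ'(r-1) - γ'(q-1) - 2δ + κ > 0, 1/q + 1/r < 1 and κq/2 < 1. -/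
/-!
With `q = r / (r - 1)` one has `q - 1 = 1 / (r - 1)` and `2 / q = 2 (r - 1) / r`, so
`γ ↦ -γ (r - 1) - γ (q - 1) + 2 / q` is an affine function vanishing exactly at the threshold
`γ(r) = 2 (r - 1)² / (r ((r - 1)² + 1))`; below the threshold it is positive. At
`(κ, r', δ) = (2 / q, r, 0)` the remaining constraints hold with equality, and moving to
`(2 / q - t, r + t, t)` for small `t > 0` makes them strict while keeping the margin positive.
-/

open Filter Topology Real

noncomputable def threshold (r : ℝ) : ℝ := 2 * (r - 1) ^ 2 / (r * ((r - 1) ^ 2 + 1))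

variable {r q γ : ℝ}

lemma threshold_balance (hr : 1 < r) :
    -threshold r * (r - 1) - threshold r / (r - 1) + 2 * (r - 1) / r = 0 := by
  have : r - 1 ≠ 0 := (sub_pos.2 hr).ne'
  have : r ≠ 0 := by positivity
  unfold threshold
  field_simp
  ring

lemma threshold_mul_conjExponent_lt_two (hr : 1 < r) : threshold r * conjExponent r < 2 := by
  have hr1 : 0 < r - 1 := sub_pos.2 hr
  have : r ≠ 0 := by positivity
  calc threshold r * conjExponent r = 2 * (r - 1) / ((r - 1) ^ 2 + 1) := by
        unfold threshold conjExponent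
        field_simp
    _ < 2 := by
        rw [div_lt_iff₀ (by positivity)]
        nlinarith [sq_nonneg (r - 2)]

lemma margin_pos_of_lt_threshold (hr : 1 < r) (hγ : γ < threshold r) :
    0 < -γ * (r - 1) - γ * (conjExponent r - 1) + 2 / conjExponent r := by
  have hr1 : 0 < r - 1 := sub_pos.2 hr
  have : r ≠ 0 := by positivity
  have hsub_one : conjExponent r - 1 = 1 / (r - 1) := by unfold conjExponent; field_simp; ring
  have htwo_div : 2 / conjExponent r = 2 * (r - 1) / r := by unfold conjExponent; field_simp
  have hsplit : -γ * (r - 1) - γ * (conjExponent r - 1) + 2 / conjExponent r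
      = (threshold r - γ) * ((r - 1) + 1 / (r - 1)) := by
    rw [hsub_one, htwo_div]
    linear_combination threshold_balance hr
  rw [hsplit]
  exact mul_pos (sub_pos.2 hγ) (by positivity)

lemma exists_strict_of_holderConjugate (h : q.HolderConjugate r)
    (hpos : 0 < -γ * (r - 1) - γ * (q - 1) + 2 / q) :
    ∃ κ r' δ : ℝ, 0 < κ ∧ 1 < r' ∧ 0 < δ ∧
      -γ * (r' - 1) - γ * (q - 1) - 2 * δ + κ > 0 ∧ 1 / q + 1 / r' < 1 ∧ κ * q / 2 < 1 := by
  have hq := h.pos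
  have hr := h.symm.lt
  have eventually_pos : ∀ f : ℝ → ℝ, Continuous f → 0 < f 0 → ∀ᶠ t in 𝓝[>] 0, 0 < f t :=
    fun f hf h0 => nhdsWithin_le_nhds (continuousAt_const.eventually_lt hf.continuousAt h0)
  have hκ := eventually_pos (fun t => 2 / q - t) (by fun_prop) (by simpa using h.one_div_pos)
  have hmargin := eventually_pos (fun t => -γ * (r + t - 1) - γ * (q - 1) - 2 * t + (2 / q - t))
    (by fun_prop) (by simpa using hpos)
  obtain ⟨t, ht, hκt, hmt⟩ := (eventually_mem_nhdsWithin.and (hκ.and hmargin)).exists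
  have ht : 0 < t := ht
  refine ⟨2 / q - t, r + t, t, hκt, by linarith, ht, hmt, ?_, ?_⟩
  · calc 1 / q + 1 / (r + t) < 1 / q + 1 / r := by gcongr; linarith
      _ = 1 := by simpa using h.inv_add_inv_eq_one
  · have : (2 / q - t) * q / 2 = 1 - t * q / 2 := by field_simp
    rw [this]
    linarith [mul_pos ht hq]

/-- Let `γ = 2(r-1)²/(r((r-1)²+1))` for some `r > 1`, and set `q = r/(r-1)` and
`κ = 2/q`. Then `-γ(r-1) - γ/(r-1) + 2(r-1)/r = 0`. Consequently, for every `γ' < γ`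
there exist `q > 1` with `γ'q < 2`, `κ > 0`, `r > 1` and `δ > 0` such that
`-γ'(r-1) - γ'(q-1) - 2δ + κ > 0`, `1/q + 1/r < 1` and `κq/2 < 1`. -/
theorem stmt_7 (r : ℝ) (hr : 1 < r) :
    (-(2 * (r - 1) ^ 2 / (r * ((r - 1) ^ 2 + 1))) * (r - 1)
      - (2 * (r - 1) ^ 2 / (r * ((r - 1) ^ 2 + 1))) / (r - 1)
      + 2 * (r - 1) / r = 0) ∧
    ∀ γ' : ℝ, γ' < 2 * (r - 1) ^ 2 / (r * ((r - 1) ^ 2 + 1)) →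
      ∃ q κ r' δ : ℝ, 1 < q ∧ γ' * q < 2 ∧ 0 < κ ∧ 1 < r' ∧ 0 < δ ∧
        -γ' * (r' - 1) - γ' * (q - 1) - 2 * δ + κ > 0 ∧
        1 / q + 1 / r' < 1 ∧ κ * q / 2 < 1 := by
  refine ⟨threshold_balance hr, fun γ' hγ' => ?_⟩
  have hconj : (conjExponent r).HolderConjugate r := (HolderConjugate.conjExponent hr).symm
  obtain ⟨κ, r', δ, hκ, hr', hδ, hmargin, hexp, hκq⟩ :=
    exists_strict_of_holderConjugate hconj (margin_pos_of_lt_threshold hr hγ')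
  have hγq : γ' * conjExponent r < 2 :=
    (mul_lt_mul_of_pos_right hγ' hconj.pos).trans (threshold_mul_conjExponent_lt_two hr)
  exact ⟨conjExponent r, κ, r', δ, hconj.lt, hγq, hκ, hr', hδ, hmargin, hexp, hκq⟩
end
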